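/- Let M₂ be a general rotational surface of hyperbolic type with plane meridians in E⁴₂, and define H(u,v) = ½·(P(z_uu)/E + P(z_vv)/G), where E = g₀(z_u,z_u), G = g₀(z_v,z_v) and P(w) = w − (g₀(w,z_u)/E)·z_u − (g₀(w,z_v)/G)·z_v. Then for all (u,v), H(u,v) = h(u)·n₁(u,v), where n₁(u,v) = (g'·cosh(αv), −f'·cosh(βv), g'·sinh(αv), −f'·sinh(βv))/√(f'² + g'²) and h(u) = [(f'² + g'²)(β²f'g − α²fg') + (α²f² + β²g²)(f''g' − f'g'')] / (2·(f'² + g'²)^{3/2}·(α²f² + β²g²)). -/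

import Mathlib

noncomputable section

/-- The neutral metric `g₀` of `𝔼⁴₂`. -/
def neutralMetric (v w : Fin 4 → ℝ) : ℝ :=
  v 0 * w 0 + v 1 * w 1 - v 2 * w 2 - v 3 * w 3

/-- Parametrization of the general rotational surface of hyperbolic type. -/
def zHyp (α β : ℝ) (f g : ℝ → ℝ) (u v : ℝ) : Fin 4 → ℝ :=
  ![f u * Real.cosh (α * v), g u * Real.cosh (β * v),
    f u * Real.sinh (α * v), g u * Real.sinh (β * v)]

def zHyp_u (α β : ℝ) (f g : ℝ → ℝ) (u v : ℝ) : Fin 4 → ℝ :=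
  deriv (fun t => zHyp α β f g t v) u

def zHyp_v (α β : ℝ) (f g : ℝ → ℝ) (u v : ℝ) : Fin 4 → ℝ :=
  deriv (fun t => zHyp α β f g u t) v

def zHyp_uu (α β : ℝ) (f g : ℝ → ℝ) (u v : ℝ) : Fin 4 → ℝ :=
  deriv (fun t => zHyp_u α β f g t v) u

def zHyp_vv (α β : ℝ) (f g : ℝ → ℝ) (u v : ℝ) : Fin 4 → ℝ :=
  deriv (fun t => zHyp_v α β f g u t) v

/-- `g₀`-orthogonal projection onto the normal space of the surface at `(u,v)`. -/
def projHyp (α β : ℝ) (f g : ℝ → ℝ) (u v : ℝ) (w : Fin 4 → ℝ) : Fin 4 → ℝ :=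
  w - (neutralMetric w (zHyp_u α β f g u v) /
        neutralMetric (zHyp_u α β f g u v) (zHyp_u α β f g u v)) • zHyp_u α β f g u v
    - (neutralMetric w (zHyp_v α β f g u v) /
        neutralMetric (zHyp_v α β f g u v) (zHyp_v α β f g u v)) • zHyp_v α β f g u v

/-- The mean curvature vector of the general rotational surface of hyperbolic type. -/
def meanCurvHyp (α β : ℝ) (f g : ℝ → ℝ) (u v : ℝ) : Fin 4 → ℝ :=
  (1 / 2 : ℝ) •
    ((1 / neutralMetric (zHyp_u α β f g u v) (zHyp_u α β f g u v)) •
        projHyp α β f g u v (zHyp_uu α β f g u v)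
      + (1 / neutralMetric (zHyp_v α β f g u v) (zHyp_v α β f g u v)) •
        projHyp α β f g u v (zHyp_vv α β f g u v))

/-- The unit spacelike normal `n₁` of the general rotational surface of hyperbolic type. -/
def n1Hyp (α β : ℝ) (f g : ℝ → ℝ) (u v : ℝ) : Fin 4 → ℝ :=
  (1 / Real.sqrt ((deriv f u) ^ 2 + (deriv g u) ^ 2)) •
    ![deriv g u * Real.cosh (α * v), -(deriv f u * Real.cosh (β * v)),
      deriv g u * Real.sinh (α * v), -(deriv f u * Real.sinh (β * v))]

/-- The mean curvature scalar `h` of the general rotational surface of hyperbolic type. -/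
def hHyp (α β : ℝ) (f g : ℝ → ℝ) (u : ℝ) : ℝ :=
  (((deriv f u) ^ 2 + (deriv g u) ^ 2) *
      (β ^ 2 * deriv f u * g u - α ^ 2 * f u * deriv g u)
    + (α ^ 2 * (f u) ^ 2 + β ^ 2 * (g u) ^ 2) *
      (deriv (deriv f) u * deriv g u - deriv f u * deriv (deriv g) u)) /
  (2 * ((deriv f u) ^ 2 + (deriv g u) ^ 2) ^ ((3 : ℝ) / 2) *
    (α ^ 2 * (f u) ^ 2 + β ^ 2 * (g u) ^ 2))

lemma zHyp_u_eq (α β : ℝ) (f g : ℝ → ℝ) (u v : ℝ)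
    (hfd : DifferentiableAt ℝ f u) (hgd : DifferentiableAt ℝ g u) :
    zHyp_u α β f g u v =
      ![deriv f u * Real.cosh (α * v), deriv g u * Real.cosh (β * v),
        deriv f u * Real.sinh (α * v), deriv g u * Real.sinh (β * v)] := by
  have h : HasDerivAt (fun t => zHyp α β f g t v)
      (![deriv f u * Real.cosh (α * v), deriv g u * Real.cosh (β * v),
        deriv f u * Real.sinh (α * v), deriv g u * Real.sinh (β * v)]) u := by
    rw [hasDerivAt_pi]
    intro i
    fin_cases i <;> simp only [zHyp, Matrix.cons_val_zero, Matrix.cons_val_one, Matrix.head_cons,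
      Matrix.cons_val_two, Matrix.cons_val_three, Matrix.tail_cons, Fin.isValue]
    · exact hfd.hasDerivAt.mul_const _
    · exact hgd.hasDerivAt.mul_const _
    · exact hfd.hasDerivAt.mul_const _
    · exact hgd.hasDerivAt.mul_const _
  exact h.deriv

lemma zHyp_v_eq (α β : ℝ) (f g : ℝ → ℝ) (u v : ℝ) :
    zHyp_v α β f g u v =
      ![α * f u * Real.sinh (α * v), β * g u * Real.sinh (β * v),
        α * f u * Real.cosh (α * v), β * g u * Real.cosh (β * v)] := by
  have h : HasDerivAt (fun t => zHyp α β f g u t)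
      (![α * f u * Real.sinh (α * v), β * g u * Real.sinh (β * v),
        α * f u * Real.cosh (α * v), β * g u * Real.cosh (β * v)]) v := by
    rw [hasDerivAt_pi]
    intro i
    have ha : HasDerivAt (fun t : ℝ => α * t) α v := by
      simpa using (hasDerivAt_id v).const_mul α
    have hb : HasDerivAt (fun t : ℝ => β * t) β v := by
      simpa using (hasDerivAt_id v).const_mul β
    fin_cases i <;> simp only [zHyp, Matrix.cons_val_zero, Matrix.cons_val_one, Matrix.head_cons,
      Matrix.cons_val_two, Matrix.cons_val_three, Matrix.tail_cons, Fin.isValue]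
    · simpa [mul_comm, mul_assoc, mul_left_comm] using (ha.cosh).const_mul (f u)
    · simpa [mul_comm, mul_assoc, mul_left_comm] using (hb.cosh).const_mul (g u)
    · simpa [mul_comm, mul_assoc, mul_left_comm] using (ha.sinh).const_mul (f u)
    · simpa [mul_comm, mul_assoc, mul_left_comm] using (hb.sinh).const_mul (g u)
  exact h.deriv

lemma zHyp_vv_eq (α β : ℝ) (f g : ℝ → ℝ) (u v : ℝ) :
    zHyp_vv α β f g u v =
      ![α^2 * f u * Real.cosh (α * v), β^2 * g u * Real.cosh (β * v),
        α^2 * f u * Real.sinh (α * v), β^2 * g u * Real.sinh (β * v)] := by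
  have heq : (fun t => zHyp_v α β f g u t) = (fun t =>
      ![α * f u * Real.sinh (α * t), β * g u * Real.sinh (β * t),
        α * f u * Real.cosh (α * t), β * g u * Real.cosh (β * t)]) := by
    funext t; exact zHyp_v_eq α β f g u t
  have h : HasDerivAt (fun t =>
      (![α * f u * Real.sinh (α * t), β * g u * Real.sinh (β * t),
        α * f u * Real.cosh (α * t), β * g u * Real.cosh (β * t)] : Fin 4 → ℝ))
      (![α^2 * f u * Real.cosh (α * v), β^2 * g u * Real.cosh (β * v),
        α^2 * f u * Real.sinh (α * v), β^2 * g u * Real.sinh (β * v)]) v := by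
    rw [hasDerivAt_pi]
    intro i
    have ha : HasDerivAt (fun t : ℝ => α * t) α v := by
      simpa using (hasDerivAt_id v).const_mul α
    have hb : HasDerivAt (fun t : ℝ => β * t) β v := by
      simpa using (hasDerivAt_id v).const_mul β
    fin_cases i <;> simp only [Matrix.cons_val_zero, Matrix.cons_val_one, Matrix.head_cons,
      Matrix.cons_val_two, Matrix.cons_val_three, Matrix.tail_cons, Fin.isValue]
    · simpa [pow_two, mul_comm, mul_assoc, mul_left_comm] using (ha.sinh).const_mul (α * f u)
    · simpa [pow_two, mul_comm, mul_assoc, mul_left_comm] using (hb.sinh).const_mul (β * g u)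
    · simpa [pow_two, mul_comm, mul_assoc, mul_left_comm] using (ha.cosh).const_mul (α * f u)
    · simpa [pow_two, mul_comm, mul_assoc, mul_left_comm] using (hb.cosh).const_mul (β * g u)
  rw [zHyp_vv, heq]
  exact h.deriv

lemma zHyp_uu_eq (α β : ℝ) (f g : ℝ → ℝ) (p q u v : ℝ) (hu : u ∈ Set.Ioo p q)
    (hf : ContDiffOn ℝ (⊤ : ℕ∞) f (Set.Ioo p q)) (hg : ContDiffOn ℝ (⊤ : ℕ∞) g (Set.Ioo p q)) :
    zHyp_uu α β f g u v =
      ![deriv (deriv f) u * Real.cosh (α * v), deriv (deriv g) u * Real.cosh (β * v),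
        deriv (deriv f) u * Real.sinh (α * v), deriv (deriv g) u * Real.sinh (β * v)] := by
  have hf' : ContDiffOn ℝ (⊤ : ℕ∞) (deriv f) (Set.Ioo p q) :=
    hf.deriv_of_isOpen isOpen_Ioo (by simp)
  have hg' : ContDiffOn ℝ (⊤ : ℕ∞) (deriv g) (Set.Ioo p q) :=
    hg.deriv_of_isOpen isOpen_Ioo (by simp)
  have hev : (fun t => zHyp_u α β f g t v) =ᶠ[nhds u] (fun t =>
      ![deriv f t * Real.cosh (α * v), deriv g t * Real.cosh (β * v),
        deriv f t * Real.sinh (α * v), deriv g t * Real.sinh (β * v)]) := by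
    filter_upwards [isOpen_Ioo.mem_nhds hu] with t ht
    exact zHyp_u_eq α β f g t v
      ((hf.differentiableOn (by simp)).differentiableAt (isOpen_Ioo.mem_nhds ht))
      ((hg.differentiableOn (by simp)).differentiableAt (isOpen_Ioo.mem_nhds ht))
  have hfd : DifferentiableAt ℝ (deriv f) u :=
    (hf'.differentiableOn (by simp)).differentiableAt (isOpen_Ioo.mem_nhds hu)
  have hgd : DifferentiableAt ℝ (deriv g) u :=
    (hg'.differentiableOn (by simp)).differentiableAt (isOpen_Ioo.mem_nhds hu)
  have h : HasDerivAt (fun t =>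
      (![deriv f t * Real.cosh (α * v), deriv g t * Real.cosh (β * v),
        deriv f t * Real.sinh (α * v), deriv g t * Real.sinh (β * v)] : Fin 4 → ℝ))
      (![deriv (deriv f) u * Real.cosh (α * v), deriv (deriv g) u * Real.cosh (β * v),
        deriv (deriv f) u * Real.sinh (α * v), deriv (deriv g) u * Real.sinh (β * v)]) u := by
    rw [hasDerivAt_pi]
    intro i
    fin_cases i <;> simp only [Matrix.cons_val_zero, Matrix.cons_val_one, Matrix.head_cons,
      Matrix.cons_val_two, Matrix.cons_val_three, Matrix.tail_cons, Fin.isValue]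
    · exact hfd.hasDerivAt.mul_const _
    · exact hgd.hasDerivAt.mul_const _
    · exact hfd.hasDerivAt.mul_const _
    · exact hgd.hasDerivAt.mul_const _
  rw [zHyp_uu, hev.deriv_eq]
  exact h.deriv

set_option maxHeartbeats 1600000 in
/-- The mean curvature vector of a general rotational surface of hyperbolic type with
plane meridians is `H = h·n₁`. -/
theorem mean_curvature_vector_hyperbolic
    (α β p q : ℝ) (hα : 0 < α) (hβ : 0 < β) (hpq : p < q)
    (f g : ℝ → ℝ)
    (hf : ContDiffOn ℝ (⊤ : ℕ∞) f (Set.Ioo p q)) (hg : ContDiffOn ℝ (⊤ : ℕ∞) g (Set.Ioo p q))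
    (h1 : ∀ u ∈ Set.Ioo p q, 0 < (deriv f u) ^ 2 + (deriv g u) ^ 2)
    (h2 : ∀ u ∈ Set.Ioo p q, 0 < α ^ 2 * (f u) ^ 2 + β ^ 2 * (g u) ^ 2) :
    ∀ u ∈ Set.Ioo p q, ∀ v : ℝ,
      meanCurvHyp α β f g u v = hHyp α β f g u • n1Hyp α β f g u v := by
  intro u hu v
  have hfd : DifferentiableAt ℝ f u :=
    (hf.differentiableOn (by simp)).differentiableAt (isOpen_Ioo.mem_nhds hu)
  have hgd : DifferentiableAt ℝ g u :=
    (hg.differentiableOn (by simp)).differentiableAt (isOpen_Ioo.mem_nhds hu)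
  have hzu := zHyp_u_eq α β f g u v hfd hgd
  have hzv := zHyp_v_eq α β f g u v
  have hzuu := zHyp_uu_eq α β f g p q u v hu hf hg
  have hzvv := zHyp_vv_eq α β f g u v
  have hE := h1 u hu
  have hGG := h2 u hu
  have hc1 := Real.cosh_sq_sub_sinh_sq (α * v)
  have hc2 := Real.cosh_sq_sub_sinh_sq (β * v)
  -- metric values
  have m1 : neutralMetric (zHyp_u α β f g u v) (zHyp_u α β f g u v)
      = (deriv f u) ^ 2 + (deriv g u) ^ 2 := by
    rw [hzu]; simp only [neutralMetric, Matrix.cons_val_zero, Matrix.cons_val_one,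
      Matrix.head_cons, Matrix.cons_val_two, Matrix.cons_val_three, Matrix.tail_cons]
    linear_combination (deriv f u) ^ 2 * hc1 + (deriv g u) ^ 2 * hc2
  have m2 : neutralMetric (zHyp_v α β f g u v) (zHyp_v α β f g u v)
      = -(α ^ 2 * (f u) ^ 2 + β ^ 2 * (g u) ^ 2) := by
    rw [hzv]; simp only [neutralMetric, Matrix.cons_val_zero, Matrix.cons_val_one,
      Matrix.head_cons, Matrix.cons_val_two, Matrix.cons_val_three, Matrix.tail_cons]
    linear_combination (-(α ^ 2 * (f u) ^ 2)) * hc1 + (-(β ^ 2 * (g u) ^ 2)) * hc2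
  have m3 : neutralMetric (zHyp_uu α β f g u v) (zHyp_u α β f g u v)
      = deriv f u * deriv (deriv f) u + deriv g u * deriv (deriv g) u := by
    rw [hzuu, hzu]; simp only [neutralMetric, Matrix.cons_val_zero, Matrix.cons_val_one,
      Matrix.head_cons, Matrix.cons_val_two, Matrix.cons_val_three, Matrix.tail_cons]
    linear_combination (deriv f u * deriv (deriv f) u) * hc1
      + (deriv g u * deriv (deriv g) u) * hc2
  have m4 : neutralMetric (zHyp_uu α β f g u v) (zHyp_v α β f g u v) = 0 := by
    rw [hzuu, hzv]; simp only [neutralMetric, Matrix.cons_val_zero, Matrix.cons_val_one,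
      Matrix.head_cons, Matrix.cons_val_two, Matrix.cons_val_three, Matrix.tail_cons]
    ring
  have m5 : neutralMetric (zHyp_vv α β f g u v) (zHyp_u α β f g u v)
      = α ^ 2 * f u * deriv f u + β ^ 2 * g u * deriv g u := by
    rw [hzvv, hzu]; simp only [neutralMetric, Matrix.cons_val_zero, Matrix.cons_val_one,
      Matrix.head_cons, Matrix.cons_val_two, Matrix.cons_val_three, Matrix.tail_cons]
    linear_combination (α ^ 2 * f u * deriv f u) * hc1 + (β ^ 2 * g u * deriv g u) * hc2
  have m6 : neutralMetric (zHyp_vv α β f g u v) (zHyp_v α β f g u v) = 0 := by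
    rw [hzvv, hzv]; simp only [neutralMetric, Matrix.cons_val_zero, Matrix.cons_val_one,
      Matrix.head_cons, Matrix.cons_val_two, Matrix.cons_val_three, Matrix.tail_cons]
    ring
  -- rewrite the rpow in hHyp
  set sE := Real.sqrt ((deriv f u) ^ 2 + (deriv g u) ^ 2) with hsEdef
  have hsEpos : 0 < sE := Real.sqrt_pos.mpr hE
  have hsE2 : sE ^ 2 = (deriv f u) ^ 2 + (deriv g u) ^ 2 := Real.sq_sqrt hE.le
  have h32 : ((deriv f u) ^ 2 + (deriv g u) ^ 2) ^ ((3 : ℝ) / 2) = sE ^ 3 := by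
    rw [show ((3 : ℝ) / 2) = (1 / 2) * 3 by ring, Real.rpow_mul hE.le,
      show ((3 : ℝ)) = ((3 : ℕ) : ℝ) by norm_num, Real.rpow_natCast, hsEdef,
      Real.sqrt_eq_rpow]
  -- combine scalars on the RHS
  have hscal : hHyp α β f g u • n1Hyp α β f g u v =
      ((((deriv f u) ^ 2 + (deriv g u) ^ 2) *
          (β ^ 2 * deriv f u * g u - α ^ 2 * f u * deriv g u)
        + (α ^ 2 * (f u) ^ 2 + β ^ 2 * (g u) ^ 2) *
          (deriv (deriv f) u * deriv g u - deriv f u * deriv (deriv g) u)) /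
        (2 * ((deriv f u) ^ 2 + (deriv g u) ^ 2) ^ 2 *
          (α ^ 2 * (f u) ^ 2 + β ^ 2 * (g u) ^ 2))) •
      ![deriv g u * Real.cosh (α * v), -(deriv f u * Real.cosh (β * v)),
        deriv g u * Real.sinh (α * v), -(deriv f u * Real.sinh (β * v))] := by
    rw [hHyp, n1Hyp, h32, smul_smul, ← hsEdef]
    congr 1
    have h4 : sE ^ 3 * sE = (((deriv f u) ^ 2 + (deriv g u) ^ 2)) ^ 2 := by
      rw [← hsE2]; ring
    rw [div_mul_div_comm, mul_one]
    congr 1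
    linear_combination 2 * (α ^ 2 * (f u) ^ 2 + β ^ 2 * (g u) ^ 2) * h4
  rw [hscal]
  have hEne : ((deriv f u) ^ 2 + (deriv g u) ^ 2) ≠ 0 := hE.ne'
  have hGGne : (α ^ 2 * (f u) ^ 2 + β ^ 2 * (g u) ^ 2) ≠ 0 := hGG.ne'
  simp only [meanCurvHyp, projHyp]
  rw [m1, m2, m3, m4, m5, m6]
  funext i
  fin_cases i <;>
    simp only [hzu, hzv, hzuu, hzvv,
      Pi.smul_apply, Pi.add_apply, Pi.sub_apply, smul_eq_mul,
      Matrix.cons_val_zero, Matrix.cons_val_one, Matrix.head_cons,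
      Matrix.cons_val_two, Matrix.cons_val_three, Matrix.tail_cons,
      zero_div, zero_smul, zero_mul, sub_zero, div_neg, neg_neg, neg_smul, smul_neg,
      mul_neg, neg_mul, one_div, sub_neg_eq_add, Fin.isValue,
        Fin.zero_eta, Fin.mk_one, Fin.reduceFinMk, Pi.neg_apply, Pi.zero_apply] <;>
    field_simp [hEne, hGGne] <;> ring


end
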